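/- arXiv:1606.00216 — 3 statements merged into one kernel-verified Lean document; each statement's English description precedes it below -/
import Mathlib

section
/- Given integers m ≥ 1, ρ, σ, α with (ρ,σ) = 1 and (m,α) = 1, the group M = ⟨u,v | v^m, u^ρ v^α u^{-σ} v^{-α}⟩ is finite if and only if ρ^m ≠ σ^m. -/
/-- The relators of the group `M = ⟨u,v | v^m, u^ρ v^α u^{-σ} v^{-α}⟩`,
where `u` is indexed by `true` and `v` by `false`. -/
def Mrels (m : ℕ) (ρ σ α : ℤ) : Set (FreeGroup Bool) :=
  {FreeGroup.of false ^ (m : ℤ),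
   FreeGroup.of true ^ ρ * FreeGroup.of false ^ α *
     FreeGroup.of true ^ (-σ) * FreeGroup.of false ^ (-α)}

/-!
Put `w = v ^ α`. As `(m, α) = 1`, `v` is a power of `w`, and `w ^ m = 1`. The second relator says
that conjugation by `w` sends `u ^ σ` to `u ^ ρ`; iterating, conjugation by `w ^ m = 1` sends
`u ^ σ ^ m` to `u ^ ρ ^ m`, so `u ^ (ρ ^ m - σ ^ m) = 1`. If `ρ ^ m ≠ σ ^ m`, then `ρ` and `σ` are
units modulo `ρ ^ m - σ ^ m`, so `⟨u⟩ = ⟨u ^ σ⟩ = ⟨u ^ ρ⟩` is a finite subgroup normalised by `w`,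
hence by `v`, and `M = ⟨u⟩ ⟨v⟩` is finite.

If `ρ ^ m = σ ^ m`, then `σ = ρ`, or `σ = -ρ` with `m` even and hence `α` odd. Sending `u` to a
rotation of infinite order of the infinite dihedral group and `v` to `1`, respectively to a
reflection, kills both relators, so `M` is infinite.
-/

open Subgroup
open scoped Pointwise

section Group

variable {G : Type*} [Group G]

theorem conj_pow_zpow_pow_eq {g x : G} {ρ σ : ℤ} (h : g * x ^ σ * g⁻¹ = x ^ ρ) (k : ℕ) :
    g ^ k * x ^ (σ ^ k) * (g ^ k)⁻¹ = x ^ (ρ ^ k) := by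
  induction k with
  | zero => simp
  | succ k ih =>
    calc g ^ (k + 1) * x ^ (σ ^ (k + 1)) * (g ^ (k + 1))⁻¹
        = g * (g ^ k * (x ^ (σ ^ k)) ^ σ * (g ^ k)⁻¹) * g⁻¹ := by
          rw [pow_succ', pow_succ, zpow_mul]; group
      _ = (g * x ^ σ * g⁻¹) ^ (ρ ^ k) := by
          rw [← conj_zpow, ih, conj_zpow, ← zpow_mul, ← zpow_mul, mul_comm]
      _ = x ^ (ρ ^ (k + 1)) := by rw [h, ← zpow_mul, pow_succ']

theorem zpowers_zpow_eq_of_isCoprime {x : G} {k e : ℤ} (hx : x ^ e = 1) (hk : IsCoprime k e) :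
    zpowers (x ^ k) = zpowers x := by
  obtain ⟨a, b, hab⟩ := hk
  refine le_antisymm (zpowers_le.2 (zpow_mem (mem_zpowers x) k)) (zpowers_le.2 ?_)
  refine mem_zpowers_iff.2 ⟨a, ?_⟩
  calc (x ^ k) ^ a = (x ^ k) ^ a * (x ^ e) ^ b := by rw [hx, one_zpow, mul_one]
    _ = x := by rw [← zpow_mul, ← zpow_mul, ← zpow_add, mul_comm k, mul_comm e, hab, zpow_one]

theorem finite_of_closure_pair_eq_top {a b : G} (hG : closure {a, b} = ⊤)
    (ha : IsOfFinOrder a) (hb : IsOfFinOrder b) (hba : b ∈ normalizer (zpowers a : Set G)) :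
    Finite G := by
  have hN : (zpowers a).Normal := by
    refine normalizer_eq_top_iff.1 (eq_top_iff.2 (hG ▸ (closure_le _).2 ?_))
    exact Set.insert_subset_iff.2 ⟨le_normalizer (mem_zpowers a), Set.singleton_subset_iff.2 hba⟩
  have hsup : zpowers a ⊔ zpowers b = ⊤ := by
    refine eq_top_iff.2 (hG ▸ (closure_le _).2 (Set.insert_subset_iff.2 ⟨?_, ?_⟩))
    · exact mem_sup_left (mem_zpowers a)
    · exact Set.singleton_subset_iff.2 (mem_sup_right (mem_zpowers b))
  have huniv : (Set.univ : Set G) = (zpowers a : Set G) * (zpowers b : Set G) := by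
    rw [← normal_mul, hsup, coe_top]
  exact Set.finite_univ_iff.1 (huniv ▸ ha.finite_zpowers.mul hb.finite_zpowers)

end Group

theorem IsCoprime.isCoprime_pow_sub_pow {R : Type*} [CommRing R] {x y : R} (h : IsCoprime x y)
    {m : ℕ} (hm : m ≠ 0) : IsCoprime x (x ^ m - y ^ m) := by
  obtain ⟨n, rfl⟩ := Nat.exists_eq_succ_of_ne_zero hm
  have := (h.pow_right (n := n + 1)).neg_right.add_mul_left_right (x ^ n)
  rwa [← pow_succ', neg_add_eq_sub] at this

theorem PresentedGroup.infinite_of_lift {ι G : Type*} [Group G] {rels : Set (FreeGroup ι)}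
    {f : ι → G} (h : ∀ r ∈ rels, FreeGroup.lift f r = 1) {i : ι} (hi : ¬IsOfFinOrder (f i)) :
    Infinite (PresentedGroup rels) := by
  rw [← not_finite_iff_infinite]
  intro hfin
  exact hi (toGroup.of h ▸ (toGroup h).isOfFinOrder (isOfFinOrder_of_finite (of i)))

namespace Mrels

variable {m : ℕ} {ρ σ α : ℤ}

theorem lift_eq_one_iff {G : Type*} [Group G] {f : Bool → G} :
    (∀ r ∈ Mrels m ρ σ α, FreeGroup.lift f r = 1) ↔
      f false ^ (m : ℤ) = 1 ∧ f true ^ ρ * f false ^ α * f true ^ (-σ) * f false ^ (-α) = 1 := by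
  simp [Mrels]

theorem closure_eq_top : closure {PresentedGroup.of true, PresentedGroup.of false} =
    (⊤ : Subgroup (PresentedGroup (Mrels m ρ σ α))) := by
  rw [← PresentedGroup.closure_range_of, Bool.range_eq, Set.pair_comm]

theorem of_false_zpow :
    (PresentedGroup.of false : PresentedGroup (Mrels m ρ σ α)) ^ (m : ℤ) = 1 :=
  (map_zpow _ _ _).symm.trans (PresentedGroup.one_of_mem (Set.mem_insert _ _))

theorem conj_of_true_zpow :
    (PresentedGroup.of false ^ α : PresentedGroup (Mrels m ρ σ α)) * PresentedGroup.of true ^ σ *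
      (PresentedGroup.of false ^ α)⁻¹ = PresentedGroup.of true ^ ρ := by
  set u : PresentedGroup (Mrels m ρ σ α) := PresentedGroup.of true
  set w : PresentedGroup (Mrels m ρ σ α) := PresentedGroup.of false ^ α
  have hrel : u ^ ρ * w * (u ^ σ)⁻¹ * w⁻¹ = 1 := by
    have := PresentedGroup.one_of_mem (rels := Mrels m ρ σ α) (Set.mem_insert_of_mem _ rfl)
    simp only [map_mul, map_inv, map_zpow, zpow_neg] at this
    exact this
  calc w * u ^ σ * w⁻¹ = (u ^ ρ * w * (u ^ σ)⁻¹ * w⁻¹)⁻¹ * u ^ ρ := by group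
    _ = u ^ ρ := by rw [hrel, inv_one, one_mul]

theorem finite_of_pow_ne_pow (hρσ : IsCoprime ρ σ) (hmα : IsCoprime (m : ℤ) α)
    (hne : ρ ^ m ≠ σ ^ m) : Finite (PresentedGroup (Mrels m ρ σ α)) := by
  have hm : m ≠ 0 := by rintro rfl; exact hne (by simp)
  set u : PresentedGroup (Mrels m ρ σ α) := PresentedGroup.of true
  set v : PresentedGroup (Mrels m ρ σ α) := PresentedGroup.of false
  set w := v ^ α
  have hv : v ^ (m : ℤ) = 1 := of_false_zpow
  have hw : w ^ m = 1 := by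
    rw [← zpow_natCast, ← zpow_mul, mul_comm, zpow_mul, hv, one_zpow]
  have hconj : w * u ^ σ * w⁻¹ = u ^ ρ := conj_of_true_zpow
  have hu : u ^ (ρ ^ m - σ ^ m) = 1 := by
    have := conj_pow_zpow_pow_eq hconj m
    rw [hw, one_mul, inv_one, mul_one] at this
    rw [zpow_sub, this, mul_inv_cancel]
  have hρe : IsCoprime ρ (ρ ^ m - σ ^ m) := hρσ.isCoprime_pow_sub_pow hm
  have hσe : IsCoprime σ (ρ ^ m - σ ^ m) := by
    simpa only [neg_sub] using (hρσ.symm.isCoprime_pow_sub_pow hm).neg_right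
  have hw_norm : w ∈ normalizer (zpowers u : Set (PresentedGroup (Mrels m ρ σ α))) := by
    rw [mem_normalizer_iff_map_conj_eq]
    calc (zpowers u).map (MulAut.conj w).toMonoidHom
        = (zpowers (u ^ σ)).map (MulAut.conj w).toMonoidHom := by
          rw [zpowers_zpow_eq_of_isCoprime hu hσe]
      _ = zpowers (u ^ ρ) := by rw [MonoidHom.map_zpowers, ← hconj]; rfl
      _ = zpowers u := zpowers_zpow_eq_of_isCoprime hu hρe
  have hv_norm : v ∈ normalizer (zpowers u : Set (PresentedGroup (Mrels m ρ σ α))) := by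
    rw [← zpowers_le, ← zpowers_zpow_eq_of_isCoprime hv hmα.symm]
    exact zpowers_le.2 hw_norm
  refine finite_of_closure_pair_eq_top closure_eq_top ?_ ?_ hv_norm
  · exact isOfFinOrder_iff_zpow_eq_one.2 ⟨_, sub_ne_zero.2 hne, hu⟩
  · exact isOfFinOrder_iff_zpow_eq_one.2 ⟨m, by exact_mod_cast hm, hv⟩

open DihedralGroup in
theorem infinite_of_pow_eq_pow (hm : m ≠ 0) (hmα : IsCoprime (m : ℤ) α) (heq : ρ ^ m = σ ^ m) :
    Infinite (PresentedGroup (Mrels m ρ σ α)) := by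
  have hr : ¬IsOfFinOrder (r 1 : DihedralGroup 0) := by
    rw [← orderOf_eq_zero_iff, orderOf_r_one]
  rcases (pow_eq_pow_iff_of_ne_zero hm).1 heq with rfl | ⟨rfl, hmeven⟩
  · refine PresentedGroup.infinite_of_lift (f := fun b => cond b (r 1) 1) (i := true) ?_ hr
    exact lift_eq_one_iff.2 ⟨by simp, by simp⟩
  · have hα : Odd α := by
      refine Int.not_even_iff_odd.1 fun hα => ?_
      have := Int.isUnit_iff.1 (hmα.isUnit_of_dvd' (by exact_mod_cast hmeven.two_dvd) hα.two_dvd)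
      omega
    have hsr : ∀ k : ℤ, Odd k → (sr 0 : DihedralGroup 0) ^ k = sr 0 := fun k hk => by
      rw [← zpow_mod_orderOf, orderOf_sr, Nat.cast_ofNat, Int.odd_iff.1 hk, zpow_one]
    refine PresentedGroup.infinite_of_lift (f := fun b => cond b (r 1) (sr 0)) (i := true) ?_ hr
    refine lift_eq_one_iff.2 ⟨orderOf_dvd_iff_zpow_eq_one.1 ?_, ?_⟩
    · rw [cond_false, orderOf_sr]; exact_mod_cast hmeven.two_dvd
    · simp [hsr α hα, hsr (-α) hα.neg, r_mul_sr, sr_mul_r, sr_mul_sr]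

end Mrels

/-- with `(ρ,σ) = 1` and `(m,α) = 1`, the group
`M = ⟨u,v | v^m, u^ρ v^α u^{-σ} v^{-α}⟩` is finite if and only if `ρ^m ≠ σ^m`. -/
theorem stmt_2 (m : ℕ) (hm : 1 ≤ m) (ρ σ α : ℤ)
    (hρσ : Int.gcd ρ σ = 1) (hmα : Int.gcd (m : ℤ) α = 1) :
    Finite (PresentedGroup (Mrels m ρ σ α)) ↔ ρ ^ m ≠ σ ^ m := by
  have hmα' : IsCoprime (m : ℤ) α := Int.isCoprime_iff_gcd_eq_one.2 hmα
  refine ⟨fun hfin heq => ?_,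
    Mrels.finite_of_pow_ne_pow (Int.isCoprime_iff_gcd_eq_one.2 hρσ) hmα'⟩
  exact not_finite_iff_infinite.2 (Mrels.infinite_of_pow_eq_pow (by omega) hmα' heq) hfin
end

section
/- In the group E = ⟨t,y | t^n, y^r t^A y^{-s} t^{-A}⟩, if y = 1 (i.e., y represents the identity element of E), then |r − s| = 1, and in particular gcd(r,s) = 1. -/
/-- The relators of the group `E(r,n,s,A) = ⟨t,y | t^n, y^r t^A y^{-s} t^{-A}⟩`,
where `t` is indexed by `true` and `y` by `false`. -/
def Erels (n : ℕ) (r s A : ℤ) : Set (FreeGroup Bool) :=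
  {FreeGroup.of true ^ (n : ℤ),
   FreeGroup.of false ^ r * FreeGroup.of true ^ A *
     FreeGroup.of false ^ (-s) * FreeGroup.of true ^ (-A)}

/-! Sending `t ↦ 0` and `y ↦ 1` kills both relators of `E` in `ℤ/|r - s|`, since
`y^r t^A y^{-s} t^{-A} ↦ r - s`. So if `y = 1` in `E`, then `1 = 0` in `ℤ/|r - s|`, i.e.
`|r - s| = 1`; and `gcd(r, s)` divides `r - s`. -/

namespace Erels

/-- The quotient `E ⧸ ⟨⟨t⟩⟩ ≅ ℤ/|r - s|`, written multiplicatively. -/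
def toZMod (n : ℕ) (r s A : ℤ) :
    PresentedGroup (Erels n r s A) →* Multiplicative (ZMod (r - s).natAbs) :=
  PresentedGroup.toGroup (f := fun b => if b then 1 else Multiplicative.ofAdd 1) <| by
    have hrs : ((r - s : ℤ) : ZMod (r - s).natAbs) = 0 :=
      (ZMod.intCast_zmod_eq_zero_iff_dvd _ _).mpr (Int.natAbs_dvd.mpr dvd_rfl)
    rintro g (rfl | rfl)
    · simp
    · simp only [map_mul, map_zpow, FreeGroup.lift_apply_of, if_true, Bool.false_eq_true,
        if_false, one_zpow, mul_one, ← ofAdd_zsmul, ← ofAdd_add, zsmul_eq_mul]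
      rw [← Int.cast_add, ← sub_eq_add_neg, hrs, ofAdd_zero]

theorem toZMod_of_false (n : ℕ) (r s A : ℤ) :
    toZMod n r s A (PresentedGroup.of false) = Multiplicative.ofAdd 1 :=
  PresentedGroup.toGroup.of _

end Erels

theorem stmt_8_general (n : ℕ) (r s A : ℤ)
    (hy : PresentedGroup.of (rels := Erels n r s A) false = 1) :
    (r - s).natAbs = 1 ∧ Int.gcd r s = 1 := by
  have hrs : (r - s).natAbs = 1 := by
    have h := congrArg (Erels.toZMod n r s A) hy
    rwa [map_one, Erels.toZMod_of_false, ofAdd_eq_one, ZMod.one_eq_zero_iff] at h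
  refine ⟨hrs, Nat.dvd_one.mp ?_⟩
  rw [← hrs]
  exact Int.natAbs_dvd_natAbs.mpr (dvd_sub (Int.gcd_dvd_left r s) (Int.gcd_dvd_right r s))

/-- in `E = ⟨t,y | t^n, y^r t^A y^{-s} t^{-A}⟩`, if `y = 1` in `E`
then `|r - s| = 1`, and in particular `gcd(r,s) = 1`. -/
theorem stmt_8 (n : ℕ) (hn : 0 < n) (r s A : ℤ)
    (hy : PresentedGroup.of (rels := Erels n r s A) false = 1) :
    (r - s).natAbs = 1 ∧ Int.gcd r s = 1 :=
  stmt_8_general n r s A hy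
end

section
/- Let G be a finite nontrivial cyclically presented group in the class 𝔐 with parameters (r,n,s,f,A) satisfying f(r−s) ≡ 0 mod n, gcd(r,s) = gcd(n,A) = 1. Then for 0 ≤ j < n, the fixed-point subgroup Fix(θ^j) of the j-th power of the shift automorphism θ on G has order |r^{(n,j)} − s^{(n,j)}|, where (n,j) = gcd(n,j). -/
theorem IsCoprime.pow_sub_pow_right {R : Type*} [CommRing R] {r s : R} (h : IsCoprime s r)
    {n : ℕ} (hn : n ≠ 0) : IsCoprime s (r ^ n - s ^ n) := by
  obtain ⟨k, rfl⟩ := Nat.exists_eq_succ_of_ne_zero hn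
  rw [show r ^ (k + 1) - s ^ (k + 1) = r ^ (k + 1) + s * -s ^ k by ring]
  exact h.pow_right.add_mul_left_right _

theorem IsCoprime.pow_sub_pow_left {R : Type*} [CommRing R] {r s : R} (h : IsCoprime r s)
    {n : ℕ} (hn : n ≠ 0) : IsCoprime r (r ^ n - s ^ n) := by
  rw [← neg_sub, IsCoprime.neg_right_iff]
  exact h.pow_sub_pow_right hn

theorem exists_nat_mul_modEq_one {a : ℤ} {n : ℕ} [NeZero n] (h : IsCoprime a n) :
    ∃ k : ℕ, a * k ≡ 1 [ZMOD n] := by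
  refine ⟨((ZMod.unitOfIsCoprime a h)⁻¹ : (ZMod n)ˣ).val.val, ?_⟩
  rw [← ZMod.intCast_eq_intCast_iff]
  push_cast
  rw [ZMod.natCast_zmod_val, ← ZMod.coe_unitOfIsCoprime a h, Units.mul_inv]

section Group
variable {G : Type*} [Group G]

theorem zpow_eq_self_of_modEq_one {x : G} {n : ℕ} (hx : x ^ n = 1) {a : ℤ}
    (ha : a ≡ 1 [ZMOD n]) : x ^ a = x := by
  conv_rhs => rw [← zpow_one x]
  exact zpow_eq_zpow_iff_modEq.mpr
    (ha.of_dvd (Int.natCast_dvd_natCast.mpr (orderOf_dvd_of_pow_eq_one hx)))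

theorem pow_eq_pow_of_natCast_eq {x : G} {n : ℕ} (hx : x ^ n = 1) {b c : ℕ}
    (h : (b : ZMod n) = c) : x ^ b = x ^ c :=
  pow_eq_pow_iff_modEq.mpr
    (((ZMod.natCast_eq_natCast_iff _ _ _).mp h).of_dvd (orderOf_dvd_of_pow_eq_one hx))

theorem zpow_eq_zpow_iff_intCast_eq {x : G} {a c : ℤ} :
    x ^ a = x ^ c ↔ (a : ZMod (orderOf x)) = c := by
  rw [zpow_eq_zpow_iff_modEq, ZMod.intCast_eq_intCast_iff]

theorem pow_gcd_mem_iff {H : Subgroup G} {g : G} {n : ℕ} (hg : g ^ n = 1) (j : ℕ) :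
    g ^ Nat.gcd n j ∈ H ↔ g ^ j ∈ H := by
  constructor
  · intro h
    obtain ⟨c, hc⟩ := Nat.gcd_dvd_right n j
    rw [hc, pow_mul]
    exact H.pow_mem h c
  · intro h
    have bezout : g ^ Nat.gcd n j = (g ^ n) ^ Nat.gcdA n j * (g ^ j) ^ Nat.gcdB n j := by
      rw [← zpow_natCast, Nat.gcd_eq_gcd_ab, zpow_add, zpow_mul, zpow_mul, zpow_natCast,
        zpow_natCast]
    rw [bezout, hg, one_zpow, one_mul]
    exact H.zpow_mem h _

theorem mem_zpowers_of_zpow_eq_zpow {y z : G} {r s : ℤ} (hs : IsCoprime s (orderOf z))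
    (h : y ^ r = z ^ s) : z ∈ Subgroup.zpowers y := by
  obtain ⟨a, b, hab⟩ := hs
  refine Subgroup.mem_zpowers_iff.mpr ⟨r * a, ?_⟩
  calc y ^ (r * a) = z ^ (a * s + b * orderOf z) := by
        rw [zpow_mul, h, ← zpow_mul, zpow_add, mul_comm b, zpow_mul z (orderOf z : ℤ),
          zpow_natCast, pow_orderOf_eq_one, one_zpow, mul_one, mul_comm]
    _ = z := by rw [hab, zpow_one]

theorem mul_zpow_eq_zpow_mul_of_conj_eq {t y : G} {h : ℤ} (hty : t * y * t⁻¹ = y ^ h) (a : ℤ)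
    (b : ℕ) : t ^ b * y ^ a = y ^ (a * h ^ b) * t ^ b := by
  induction b generalizing a with
  | zero => simp
  | succ b ih =>
    calc t ^ (b + 1) * y ^ a = t ^ b * ((t * y * t⁻¹) ^ a * t) := by
          rw [conj_zpow, pow_succ]; group
      _ = y ^ (a * h ^ (b + 1)) * t ^ (b + 1) := by
          rw [hty, ← zpow_mul, ← mul_assoc, ih, pow_succ t, ← mul_assoc,
            show h * a * h ^ b = a * h ^ (b + 1) by ring]

theorem zpow_mul_pow_mem_centralizer_iff {t y : G} {h : ℤ} (hty : t * y * t⁻¹ = y ^ h) (a : ℤ)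
    (b j : ℕ) : y ^ a * t ^ b ∈ Subgroup.centralizer {t ^ j} ↔ y ^ (a * h ^ j) = y ^ a := by
  rw [Subgroup.mem_centralizer_singleton_iff, ← mul_assoc, mul_zpow_eq_zpow_mul_of_conj_eq hty,
    mul_assoc, mul_assoc, ← pow_add, ← pow_add, add_comm, mul_left_inj]
  exact eq_comm

theorem zpow_eq_conj_zpow_of_mul_eq_one {t y : G} {r s A : ℤ}
    (hrel : y ^ r * t ^ A * y ^ (-s) * t ^ (-A) = 1) : y ^ r = MulAut.conj (t ^ A) y ^ s := by
  rw [MulAut.conj_apply, conj_zpow, ← mul_inv_eq_one, ← hrel]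
  group

theorem MulAut.zpow_pow_eq_of_zpow_eq {σ : MulAut G} {y : G} {r s : ℤ} (h : y ^ r = σ y ^ s)
    (k : ℕ) : y ^ r ^ k = (σ ^ k) y ^ s ^ k := by
  induction k with
  | zero => simp
  | succ k ih =>
    calc y ^ r ^ (k + 1) = ((σ ^ k) (y ^ r)) ^ s ^ k := by
          rw [map_zpow, ← zpow_mul, mul_comm, zpow_mul, ← ih, ← zpow_mul, pow_succ]
      _ = (σ ^ (k + 1)) y ^ s ^ (k + 1) := by
          rw [h, map_zpow, ← zpow_mul, pow_succ σ, MulAut.mul_apply, pow_succ' s]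

theorem zpow_pow_sub_pow_eq_one {t y : G} {n : ℕ} {r s A : ℤ} (ht : t ^ n = 1)
    (hrel : y ^ r * t ^ A * y ^ (-s) * t ^ (-A) = 1) : y ^ (r ^ n - s ^ n) = 1 := by
  have hσ : MulAut.conj (t ^ A) ^ n = 1 := by
    rw [← map_pow, ← zpow_natCast, ← zpow_mul, mul_comm, zpow_mul, zpow_natCast, ht, one_zpow,
      map_one]
  have := MulAut.zpow_pow_eq_of_zpow_eq (zpow_eq_conj_zpow_of_mul_eq_one hrel) n
  rw [hσ, MulAut.one_apply] at this
  rw [zpow_sub, this, mul_inv_cancel]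

end Group

theorem mul_units_pow_eq_self_iff {R : Type*} [CommRing R] {n : ℕ} [NeZero n] {A : ℤ}
    (hA : IsCoprime A n) {r s : R} (hs : IsUnit s) {u : Rˣ} (hun : u ^ n = 1)
    (huA : ((u ^ A : Rˣ) : R) * s = r) (α : R) (j : ℕ) :
    α * ↑(u ^ j) = α ↔ α * (r ^ Nat.gcd n j - s ^ Nat.gcd n j) = 0 := by
  set d := Nat.gcd n j
  set S := MulAction.stabilizer Rˣ α
  obtain ⟨k, hk⟩ := exists_nat_mul_modEq_one hA
  have hmem {v : Rˣ} : v ∈ S ↔ ↑v * α = α := MulAction.mem_stabilizer_iff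
  have hd : u ^ d ∈ S ↔ (u ^ A) ^ d ∈ S := by
    refine ⟨fun h => ?_, fun h => ?_⟩
    · rw [← zpow_natCast, ← zpow_mul, mul_comm, zpow_mul, zpow_natCast]
      exact zpow_mem h A
    · rw [← zpow_eq_self_of_modEq_one hun hk, zpow_mul, zpow_natCast, pow_right_comm]
      exact pow_mem h k
  rw [mul_comm, ← hmem, ← pow_gcd_mem_iff hun, hd, hmem, Units.val_pow_eq_pow_val,
    ← (hs.pow d).mul_right_inj, ← mul_assoc, ← mul_pow, mul_comm s, huA, ← sub_eq_zero,
    ← sub_mul, mul_comm α]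

theorem ZMod.card_mul_eq_zero {m : ℕ} [NeZero m] {W : ℤ} (hW : W ∣ m) :
    Nat.card {α : ZMod m // α * W = 0} = W.natAbs := by
  have key := IsAddCyclic.card_nsmulAddMonoidHom_ker (ZMod m) W.natAbs
  rw [Nat.card_zmod, Nat.gcd_eq_right (by simpa using Int.natAbs_dvd_natAbs.mpr hW)] at key
  rw [← key]
  refine Nat.card_congr (Equiv.subtypeEquivRight fun α => ?_)
  rw [AddMonoidHom.mem_ker, nsmulAddMonoidHom_apply, nsmul_eq_mul, mul_comm]
  rcases Int.natAbs_eq W with hW | hW <;> rw [hW] <;> simp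

theorem ZMod.card_mul_units_pow_eq_self {n m : ℕ} [NeZero n] [NeZero m] {r s A : ℤ}
    (hA : IsCoprime A n) (hs : IsCoprime s m) (hm : r ^ n - s ^ n ∣ m) {u : (ZMod m)ˣ}
    (hun : u ^ n = 1) (huA : ((u ^ A : (ZMod m)ˣ) : ZMod m) * s = r) (j : ℕ) :
    Nat.card {α : ZMod m // α * ↑(u ^ j) = α} =
      (r ^ Nat.gcd n j - s ^ Nat.gcd n j).natAbs := by
  have hdvd : r ^ Nat.gcd n j - s ^ Nat.gcd n j ∣ m := by
    obtain ⟨c, hc⟩ := Nat.gcd_dvd_left n j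
    refine (sub_dvd_pow_sub_pow _ _ c).trans ?_
    rwa [← pow_mul, ← pow_mul, ← hc]
  rw [← ZMod.card_mul_eq_zero hdvd]
  refine Nat.card_congr (Equiv.subtypeEquivRight fun α => ?_)
  rw [mul_units_pow_eq_self_iff hA (ZMod.unitOfIsCoprime s hs).isUnit hun huA]
  push_cast
  rfl

theorem ZMod.exists_units_pow_eq_one_zpow_mul_eq {n m : ℕ} [NeZero n] {r s A : ℤ}
    (hm : (m : ℤ) ∣ r ^ n - s ^ n) (hr : IsCoprime r m) (hs : IsCoprime s m)
    (hA : IsCoprime A n) : ∃ u : (ZMod m)ˣ, u ^ n = 1 ∧ ((u ^ A : (ZMod m)ˣ) : ZMod m) * s = r := by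
  set g := ZMod.unitOfIsCoprime r hr * (ZMod.unitOfIsCoprime s hs)⁻¹
  have hg : g ^ n = 1 := by
    rw [mul_pow, inv_pow, mul_inv_eq_one, Units.ext_iff]
    push_cast [ZMod.coe_unitOfIsCoprime]
    rw [← sub_eq_zero]
    exact_mod_cast (ZMod.intCast_zmod_eq_zero_iff_dvd _ _).mpr hm
  obtain ⟨k, hk⟩ := exists_nat_mul_modEq_one hA
  refine ⟨g ^ k, by rw [pow_right_comm, hg, one_pow], ?_⟩
  rw [← zpow_natCast, ← zpow_mul, zpow_eq_self_of_modEq_one hg (by rwa [mul_comm]),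
    Units.val_mul, mul_assoc, ← ZMod.coe_unitOfIsCoprime s hs, Units.inv_mul, mul_one]
  rfl

section
variable {n : ℕ} {r s A : ℤ}

local notation "E" => PresentedGroup (Erels n r s A)
local notation "𝐭" => (PresentedGroup.of true : PresentedGroup (Erels n r s A))
local notation "𝐲" => (PresentedGroup.of false : PresentedGroup (Erels n r s A))

namespace Erels

theorem of_true_pow_eq_one : 𝐭 ^ n = 1 := by
  have := PresentedGroup.one_of_mem (rels := Erels n r s A) (Set.mem_insert _ _)
  rwa [map_zpow, zpow_natCast] at this

theorem relator_eq_one : 𝐲 ^ r * 𝐭 ^ A * 𝐲 ^ (-s) * 𝐭 ^ (-A) = 1 := by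
  have := PresentedGroup.one_of_mem (rels := Erels n r s A) (Set.mem_insert_of_mem _ rfl)
  rwa [map_mul, map_mul, map_mul, map_zpow, map_zpow, map_zpow, map_zpow] at this

def toPerm {R : Type*} [CommRing R] (u : Rˣ) (hun : u ^ n = 1)
    (huA : ((u ^ A : Rˣ) : R) * s = r) : E →* Equiv.Perm R :=
  PresentedGroup.toGroup
    (f := fun b => cond b (MulAction.toPermHom Rˣ R u) (Equiv.addRight 1)) <| by
    rintro w (rfl | rfl)
    · rw [map_zpow, FreeGroup.lift_apply_of, cond_true, ← map_zpow, zpow_natCast, hun, map_one]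
    · rw [map_mul, map_mul, map_mul, map_zpow, map_zpow, map_zpow, map_zpow,
        FreeGroup.lift_apply_of, FreeGroup.lift_apply_of, cond_true, cond_false, ← map_zpow,
        ← map_zpow, Equiv.zsmul_addRight, Equiv.zsmul_addRight]
      ext x
      simp only [zsmul_eq_mul, mul_one, MulAction.toPermHom_apply, neg_smul, zpow_neg,
        Equiv.Perm.coe_mul, Equiv.coe_addRight, Function.comp_apply, MulAction.toPerm_apply,
        smul_add, smul_inv_smul, smul_neg, Equiv.Perm.coe_one, id_eq]
      rw [Units.smul_def, smul_eq_mul, huA]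
      ring

section toPerm
variable {R : Type*} [CommRing R] {u : Rˣ} (hun : u ^ n = 1) (huA : ((u ^ A : Rˣ) : R) * s = r)

theorem toPerm_of_true : toPerm u hun huA 𝐭 = MulAction.toPermHom Rˣ R u :=
  PresentedGroup.toGroup.of _

theorem toPerm_of_false : toPerm u hun huA 𝐲 = Equiv.addRight 1 :=
  PresentedGroup.toGroup.of _

theorem toPerm_zpow_mul_pow_apply_zero (a : ℤ) (b : ℕ) :
    toPerm u hun huA (𝐲 ^ a * 𝐭 ^ b) 0 = a := by
  rw [map_mul, map_zpow, map_pow, toPerm_of_true, toPerm_of_false, Equiv.Perm.mul_apply,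
    ← map_pow, MulAction.toPermHom_apply, MulAction.toPerm_apply, smul_zero,
    Equiv.zsmul_addRight]
  exact (zero_add _).trans (zsmul_one a)

theorem toPerm_conj : toPerm u hun huA (𝐭 * 𝐲 * 𝐭⁻¹) = Equiv.addRight (u : R) := by
  ext x
  simp [toPerm_of_true, toPerm_of_false, Units.smul_def]

end toPerm

theorem natCast_orderOf_eq_zero {R : Type*} [CommRing R] {u : Rˣ} (hun : u ^ n = 1)
    (huA : ((u ^ A : Rˣ) : R) * s = r) : ((orderOf 𝐲 : ℕ) : R) = 0 := by
  have h := toPerm_zpow_mul_pow_apply_zero hun huA (orderOf 𝐲) 0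
  rwa [zpow_natCast, pow_orderOf_eq_one, pow_zero, mul_one, map_one, Equiv.Perm.one_apply,
    eq_comm, Int.cast_natCast] at h

theorem orderOf_of_false {u : (ZMod (r ^ n - s ^ n).natAbs)ˣ} (hun : u ^ n = 1)
    (huA : ((u ^ A : (ZMod _)ˣ) : ZMod (r ^ n - s ^ n).natAbs) * s = r) :
    orderOf 𝐲 = (r ^ n - s ^ n).natAbs :=
  Nat.dvd_antisymm
    (Int.natCast_dvd.mp (orderOf_dvd_iff_zpow_eq_one.mpr
      (zpow_pow_sub_pow_eq_one of_true_pow_eq_one relator_eq_one)))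
    ((ZMod.natCast_eq_zero_iff _ _).mp (natCast_orderOf_eq_zero hun huA))

theorem exists_conj_eq_zpow [NeZero n] (hA : IsCoprime A n) {m : ℕ} {u : (ZMod m)ˣ}
    (hun : u ^ n = 1) (huA : ((u ^ A : (ZMod m)ˣ) : ZMod m) * s = r) (hord : orderOf 𝐲 = m)
    (hs : IsCoprime s m) : ∃ h : ℤ, 𝐭 * 𝐲 * 𝐭⁻¹ = 𝐲 ^ h ∧ (h : ZMod m) = u := by
  set σ := MulAut.conj (𝐭 ^ A)
  have hσ : σ 𝐲 ∈ Subgroup.zpowers 𝐲 :=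
    mem_zpowers_of_zpow_eq_zpow (by rwa [MulEquiv.orderOf_eq, hord])
      (zpow_eq_conj_zpow_of_mul_eq_one relator_eq_one)
  have hσk (k : ℕ) : (σ ^ k) 𝐲 ∈ Subgroup.zpowers 𝐲 := by
    induction k with
    | zero => exact Subgroup.mem_zpowers _
    | succ k ih =>
      obtain ⟨i, hi⟩ := Subgroup.mem_zpowers_iff.mp ih
      rw [pow_succ', MulAut.mul_apply, ← hi, map_zpow]
      exact zpow_mem hσ i
  -- `t` itself is a power of `t ^ A`
  obtain ⟨k, hk⟩ := exists_nat_mul_modEq_one hA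
  have hconj : (σ ^ k) 𝐲 = 𝐭 * 𝐲 * 𝐭⁻¹ := by
    rw [← map_pow, ← zpow_natCast, ← zpow_mul, zpow_eq_self_of_modEq_one of_true_pow_eq_one hk,
      MulAut.conj_apply]
  obtain ⟨h, hh⟩ := Subgroup.mem_zpowers_iff.mp (hσk k)
  refine ⟨h, (hh.trans hconj).symm, ?_⟩
  have := congrArg (fun f => f 0) (congrArg (toPerm u hun huA) (hh.trans hconj))
  simpa [toPerm_conj, toPerm_of_false, Equiv.zsmul_addRight] using this

theorem exists_eq_zpow_mul_pow [NeZero n] {h : ℤ} (hty : 𝐭 * 𝐲 * 𝐭⁻¹ = 𝐲 ^ h) (x : E) :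
    ∃ (a : ℤ) (b : ℕ), x = 𝐲 ^ a * 𝐭 ^ b := by
  have hx : x ∈ Subgroup.closure (Set.range PresentedGroup.of) := by
    rw [PresentedGroup.closure_range_of]; trivial
  have ht_mul (c : ℕ) (a : ℤ) (b : ℕ) :
      𝐭 ^ c * (𝐲 ^ a * 𝐭 ^ b) = 𝐲 ^ (a * h ^ c) * 𝐭 ^ (c + b) := by
    rw [← mul_assoc, mul_zpow_eq_zpow_mul_of_conj_eq hty, mul_assoc, pow_add]
  have ht_inv : 𝐭⁻¹ = 𝐭 ^ (n - 1) := inv_eq_of_mul_eq_one_left <| by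
    rw [← pow_succ, Nat.sub_add_cancel NeZero.one_le, of_true_pow_eq_one]
  induction hx using Subgroup.closure_induction_left with
  | one => exact ⟨0, 0, by simp⟩
  | mul_left g hg x _ ih =>
    obtain ⟨c, rfl⟩ := hg
    obtain ⟨a, b, rfl⟩ := ih
    cases c
    · exact ⟨1 + a, b, by rw [zpow_add, zpow_one, mul_assoc]⟩
    · exact ⟨a * h, 1 + b, by simpa only [pow_one] using ht_mul 1 a b⟩
  | inv_mul_cancel g hg x _ ih =>
    obtain ⟨c, rfl⟩ := hg
    obtain ⟨a, b, rfl⟩ := ih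
    cases c
    · exact ⟨-1 + a, b, by rw [zpow_add, zpow_neg_one, mul_assoc]⟩
    · exact ⟨_, _, by rw [ht_inv]; exact ht_mul _ a b⟩

/-- The two sides correspond via `y ^ a * t ^ b ↦ a`, read off as the image of `0` under
`toPerm`; membership in `ker ν` pins `b` down modulo `n`. -/
theorem card_ker_inf_centralizer [NeZero n] {m : ℕ} {u : (ZMod m)ˣ} (hun : u ^ n = 1)
    (huA : ((u ^ A : (ZMod m)ˣ) : ZMod m) * s = r) (hord : orderOf 𝐲 = m) {h : ℤ}
    (hty : 𝐭 * 𝐲 * 𝐭⁻¹ = 𝐲 ^ h) (hh : (h : ZMod m) = u) (ν : E →* Multiplicative (ZMod n))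
    (hνt : ν 𝐭 = Multiplicative.ofAdd 1) (j : ℕ) :
    Nat.card ↥(ν.ker ⊓ Subgroup.centralizer {𝐭 ^ j}) =
      Nat.card {α : ZMod m // α * ↑(u ^ j) = α} := by
  have hcent (a : ℤ) (b : ℕ) :
      𝐲 ^ a * 𝐭 ^ b ∈ Subgroup.centralizer {𝐭 ^ j} ↔ (a : ZMod m) * ↑(u ^ j) = a := by
    rw [zpow_mul_pow_mem_centralizer_iff hty, zpow_eq_zpow_iff_intCast_eq, hord]
    push_cast
    rw [hh]
  have hνt_pow (b : ℕ) : ν (𝐭 ^ b) = Multiplicative.ofAdd (b : ZMod n) := by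
    rw [map_pow, hνt, ← ofAdd_nsmul, nsmul_one]
  refine Nat.card_congr (Set.BijOn.equiv (fun x => toPerm u hun huA x 0) ⟨?_, ?_, ?_⟩)
  · rintro x ⟨-, hx⟩
    obtain ⟨a, b, rfl⟩ := exists_eq_zpow_mul_pow hty x
    change toPerm u hun huA _ 0 * _ = toPerm u hun huA _ 0
    rw [toPerm_zpow_mul_pow_apply_zero]
    exact (hcent a b).mp hx
  · rintro x ⟨hx, -⟩ x' ⟨hx', -⟩ hxx'
    obtain ⟨a, b, rfl⟩ := exists_eq_zpow_mul_pow hty x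
    obtain ⟨a', b', rfl⟩ := exists_eq_zpow_mul_pow hty x'
    simp only [toPerm_zpow_mul_pow_apply_zero] at hxx'
    have hya : 𝐲 ^ a = 𝐲 ^ a' := zpow_eq_zpow_iff_intCast_eq.mpr (hord ▸ hxx')
    replace hx : ν (𝐲 ^ a * 𝐭 ^ b) = 1 := hx
    replace hx' : ν (𝐲 ^ a' * 𝐭 ^ b') = 1 := hx'
    rw [map_mul, hνt_pow] at hx hx'
    rw [hya] at hx ⊢
    congr 1
    exact pow_eq_pow_of_natCast_eq of_true_pow_eq_one
      (Multiplicative.ofAdd.injective (mul_left_cancel (hx.trans hx'.symm)))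
  · intro α hα
    set a : ℤ := ZMod.cast α
    obtain ⟨b, hb⟩ : ∃ b : ℕ, ν (𝐲 ^ a) * Multiplicative.ofAdd (b : ZMod n) = 1 :=
      ⟨(-(ν (𝐲 ^ a)).toAdd).val, by
        rw [ZMod.natCast_zmod_val, ofAdd_neg, ofAdd_toAdd, mul_inv_cancel]⟩
    have ha : (a : ZMod m) = α := ZMod.intCast_zmod_cast α
    refine ⟨𝐲 ^ a * 𝐭 ^ b, ⟨?_, (hcent a b).mpr (by rwa [ha])⟩, ?_⟩
    · change ν _ = 1
      rwa [map_mul, hνt_pow]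
    · exact (toPerm_zpow_mul_pow_apply_zero hun huA a b).trans ha

end Erels
end

theorem stmt_16_general (n : ℕ) (hn : 0 < n) (r s A : ℤ)
    (hrs : Int.gcd r s = 1) (hnA : Int.gcd (n : ℤ) A = 1)
    (ν : PresentedGroup (Erels n r s A) →* Multiplicative (ZMod n))
    (hνt : ν (PresentedGroup.of true) = Multiplicative.ofAdd (1 : ZMod n))
    (hfin : Finite ν.ker)
    (j : ℕ) :
    Nat.card ↥(ν.ker ⊓
        Subgroup.centralizer {(PresentedGroup.of (rels := Erels n r s A) true) ^ j}) =
      (r ^ Nat.gcd n j - s ^ Nat.gcd n j).natAbs := by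
  have : NeZero n := ⟨hn.ne'⟩
  have hrs' : IsCoprime r s := Int.isCoprime_iff_gcd_eq_one.mpr hrs
  have hA : IsCoprime A n := (Int.isCoprime_iff_gcd_eq_one.mpr hnA).symm
  set m := (r ^ n - s ^ n).natAbs
  have hm : (m : ℤ) = |r ^ n - s ^ n| := Int.natCast_natAbs _
  have hr : IsCoprime r m := hm ▸ (hrs'.pow_sub_pow_left hn.ne').abs_right
  have hs : IsCoprime s m := hm ▸ (hrs'.symm.pow_sub_pow_right hn.ne').abs_right
  obtain ⟨u, hun, huA⟩ :=
    ZMod.exists_units_pow_eq_one_zpow_mul_eq (Int.natAbs_dvd.mpr dvd_rfl) hr hs hA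
  have hord : orderOf (PresentedGroup.of (rels := Erels n r s A) false) = m :=
    Erels.orderOf_of_false hun huA
  have : Finite (PresentedGroup (Erels n r s A)) :=
    (MonoidHom.finite_iff_finite_ker_range ν).mpr ⟨hfin, inferInstance⟩
  have : NeZero m := ⟨hord ▸ (orderOf_pos _).ne'⟩
  obtain ⟨h, hty, hh⟩ := Erels.exists_conj_eq_zpow hA hun huA hord hs
  rw [Erels.card_ker_inf_centralizer hun huA hord hty hh ν hνt j]
  exact ZMod.card_mul_units_pow_eq_self hA hs (Int.dvd_natAbs.mpr dvd_rfl) hun huA j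

/-- let `G` be the finite nontrivial cyclically presented group in
class `𝔐` with parameters `(r,n,s,f,A)`, realized as the kernel of the retraction
`ν = ν^f : E → ℤ_n` sending `t ↦ 1`, `y ↦ f`, where `f(r-s) ≡ 0 mod n` and
`gcd(r,s) = gcd(n,A) = 1`.  For `0 ≤ j < n`, the fixed-point subgroup of the `j`-th
power of the shift (conjugation by `t` in `E`), namely `G ∩ C_E(t^j)`, has order
`|r^{(n,j)} - s^{(n,j)}|`. -/
theorem stmt_16 (n : ℕ) (hn : 0 < n) (r s A f : ℤ)
    (hf : (n : ℤ) ∣ f * (r - s)) (hrs : Int.gcd r s = 1) (hnA : Int.gcd (n : ℤ) A = 1)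
    (ν : PresentedGroup (Erels n r s A) →* Multiplicative (ZMod n))
    (hνt : ν (PresentedGroup.of true) = Multiplicative.ofAdd (1 : ZMod n))
    (hνy : ν (PresentedGroup.of false) = Multiplicative.ofAdd ((f : ZMod n)))
    (hfin : Finite ν.ker) (hnontriv : ν.ker ≠ ⊥)
    (j : ℕ) (hj : j < n) :
    Nat.card ↥(ν.ker ⊓
        Subgroup.centralizer {(PresentedGroup.of (rels := Erels n r s A) true) ^ j}) =
      (r ^ Nat.gcd n j - s ^ Nat.gcd n j).natAbs :=
  stmt_16_general n hn r s A hrs hnA ν hνt hfin j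
end
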